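/- arXiv:2508.17122 — 2 statements merged into one kernel-verified Lean document; each statement's English description precedes it below -/
import Mathlib

section
/- Let κ,ε>0, λ≥0, and let ρ : [0,1] → ℝ be a differentiable function whose derivative ρ_x is continuous and nowhere zero on [0,1]. Let v : [0,1] → ℝ be such that v/ρ_x is four times continuously differentiable, with v(0)=v(1)=0 and (v/ρ_x)''(0)=(v/ρ_x)''(1)=0. Then ∫₀¹ (Bv)(x) v(x) dx = ∫₀¹ [ε ((v/ρ_x)'')² + λ ((v/ρ_x)')² + (v/ρ_x)² (κ + ρ_x²)] dx ≥ 0, and equality holds if and only if v ≡ 0. In particular, B is strictly positive definite on L²(0,1). -/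
/-!
With `w = v / ρ_x`, pointwise `(Bv) v = (ε w'''' - λ w'' + (κ + ρ_x²) w) w`. Integrating by parts
twice, the boundary terms vanish because `w = w'' = 0` at both endpoints, and `∫ (Bv) v` becomes the
integral of the continuous nonnegative density `ε (w'')² + λ (w')² + w² (κ + ρ_x²)`. If the
integral vanishes, so does the density on `[0,1]`, hence `w`, hence `v` since `ρ_x ≠ 0`.
-/

open MeasureTheory Set intervalIntegral

/-- The operator `B` associated with the HV Hessian:
`Bv = (1/ρ_x)[ε (v/ρ_x)'''' − λ (v/ρ_x)'' + (v/ρ_x)(κ + ρ_x²)]`,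
where `ρx` denotes the derivative `ρ_x`. -/
noncomputable def Bop (κ lam ε : ℝ) (ρx : ℝ → ℝ) (v : ℝ → ℝ) (x : ℝ) : ℝ :=
  (1 / ρx x) * (ε * iteratedDeriv 4 (fun y => v y / ρx y) x
    - lam * iteratedDeriv 2 (fun y => v y / ρx y) x
    + (v x / ρx x) * (κ + (ρx x) ^ 2))

theorem ContDiff.contDiff_one_iteratedDeriv {𝕜 F : Type*} [NontriviallyNormedField 𝕜]
    [NormedAddCommGroup F] [NormedSpace 𝕜 F] {f : 𝕜 → F} {n k : ℕ} (hf : ContDiff 𝕜 n f)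
    (hk : k < n) : ContDiff 𝕜 1 (iteratedDeriv k f) :=
  (contDiff_nat_succ_iff_contDiff_one_iteratedDeriv.1 (hf.of_le (by exact_mod_cast hk))).2

section IntegrationByParts

variable {a b : ℝ} {f g w : ℝ → ℝ}

theorem integral_mul_deriv_eq_neg_integral_deriv_mul (hf : ContDiff ℝ 1 f)
    (hg : ContDiff ℝ 1 g) (hfg : f a * g a = f b * g b) :
    ∫ x in a..b, f x * deriv g x = -∫ x in a..b, deriv f x * g x := by
  rw [integral_mul_deriv_eq_deriv_mul (fun x _ => (hf.differentiable one_ne_zero x).hasDerivAt)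
    (fun x _ => (hg.differentiable one_ne_zero x).hasDerivAt)
    ((hf.continuous_deriv le_rfl).intervalIntegrable _ _)
    ((hg.continuous_deriv le_rfl).intervalIntegrable _ _), hfg]
  ring

theorem integral_mul_iteratedDeriv_two_eq_neg_integral_deriv_sq (hw : ContDiff ℝ 2 w)
    (ha : w a = 0) (hb : w b = 0) :
    ∫ x in a..b, w x * iteratedDeriv 2 w x = -∫ x in a..b, deriv w x ^ 2 := by
  have hw'' : iteratedDeriv 2 w = deriv (deriv w) := by
    rw [iteratedDeriv_succ, iteratedDeriv_one]
  simp only [hw'', sq]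
  exact integral_mul_deriv_eq_neg_integral_deriv_mul (hw.of_le (by norm_num))
    (hw.deriv' (n := 1)) (by simp [ha, hb])

theorem integral_mul_iteratedDeriv_four_eq_integral_iteratedDeriv_two_sq (hw : ContDiff ℝ 4 w)
    (ha : w a = 0) (hb : w b = 0) (ha₂ : iteratedDeriv 2 w a = 0)
    (hb₂ : iteratedDeriv 2 w b = 0) :
    ∫ x in a..b, w x * iteratedDeriv 4 w x = ∫ x in a..b, iteratedDeriv 2 w x ^ 2 := by
  have h₄ : iteratedDeriv 4 w = deriv (iteratedDeriv 3 w) := iteratedDeriv_succ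
  have h₃ : iteratedDeriv 3 w = deriv (iteratedDeriv 2 w) := iteratedDeriv_succ
  have h₂ : iteratedDeriv 2 w = deriv (deriv w) := by rw [iteratedDeriv_succ, iteratedDeriv_one]
  rw [h₄, integral_mul_deriv_eq_neg_integral_deriv_mul (hw.of_le (by norm_num))
      (hw.contDiff_one_iteratedDeriv (by norm_num)) (by simp [ha, hb]),
    h₃, integral_mul_deriv_eq_neg_integral_deriv_mul
      ((hw.of_le (by norm_num) : ContDiff ℝ 2 w).deriv' (n := 1))
      (hw.contDiff_one_iteratedDeriv (by norm_num)) (by simp [ha₂, hb₂]),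
    ← h₂, neg_neg]
  simp only [sq]

end IntegrationByParts

theorem eqOn_zero_of_integral_eq_zero {a b : ℝ} {f : ℝ → ℝ} (hab : a < b) (hf : Continuous f)
    (hf₀ : ∀ x, 0 ≤ f x) (h : ∫ x in a..b, f x = 0) : EqOn f 0 (Icc a b) := by
  rw [integral_eq_zero_iff_of_le_of_nonneg_ae hab.le (.of_forall hf₀) (hf.intervalIntegrable _ _),
    Measure.restrict_congr_set Ioc_ae_eq_Icc] at h
  exact Measure.eqOn_Icc_of_ae_eq volume hab.ne h hf.continuousOn continuousOn_const

section Bop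

variable {κ lam ε : ℝ} {ρx v : ℝ → ℝ}

noncomputable def BopEnergyDensity (κ lam ε : ℝ) (ρx v : ℝ → ℝ) (x : ℝ) : ℝ :=
  ε * iteratedDeriv 2 (fun y => v y / ρx y) x ^ 2
    + lam * deriv (fun y => v y / ρx y) x ^ 2
    + (v x / ρx x) ^ 2 * (κ + ρx x ^ 2)

theorem Bop_mul_self (x : ℝ) :
    Bop κ lam ε ρx v x * v x =
      ε * (v x / ρx x * iteratedDeriv 4 (fun y => v y / ρx y) x)
        - lam * (v x / ρx x * iteratedDeriv 2 (fun y => v y / ρx y) x)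
        + (v x / ρx x) ^ 2 * (κ + ρx x ^ 2) := by
  simp only [Bop]
  ring

theorem integral_Bop_mul_self {a b : ℝ} (hρx : Continuous ρx)
    (hv : ContDiff ℝ 4 (fun x => v x / ρx x)) (ha : v a = 0) (hb : v b = 0)
    (ha₂ : iteratedDeriv 2 (fun x => v x / ρx x) a = 0)
    (hb₂ : iteratedDeriv 2 (fun x => v x / ρx x) b = 0) :
    ∫ x in a..b, Bop κ lam ε ρx v x * v x = ∫ x in a..b, BopEnergyDensity κ lam ε ρx v x := by
  simp only [Bop_mul_self, BopEnergyDensity]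
  set w := fun x => v x / ρx x
  have hvw : ∀ x, v x / ρx x = w x := fun _ => rfl
  simp only [hvw]
  have hwa : w a = 0 := by simp [w, ha]
  have hwb : w b = 0 := by simp [w, hb]
  have h₀ : Continuous w := hv.continuous
  have h₁ : Continuous (deriv w) := hv.continuous_deriv (by norm_num)
  have h₂ : Continuous (iteratedDeriv 2 w) := hv.continuous_iteratedDeriv 2 (by norm_num)
  have h₄ : Continuous (iteratedDeriv 4 w) := hv.continuous_iteratedDeriv 4 le_rfl
  rw [intervalIntegral.integral_add, intervalIntegral.integral_sub,
    intervalIntegral.integral_const_mul, intervalIntegral.integral_const_mul,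
    integral_mul_iteratedDeriv_four_eq_integral_iteratedDeriv_two_sq hv hwa hwb ha₂ hb₂,
    integral_mul_iteratedDeriv_two_eq_neg_integral_deriv_sq (hv.of_le (by norm_num)) hwa hwb,
    intervalIntegral.integral_add, intervalIntegral.integral_add,
    intervalIntegral.integral_const_mul, intervalIntegral.integral_const_mul]
  · ring
  all_goals apply Continuous.intervalIntegrable; fun_prop

theorem continuous_BopEnergyDensity (hρx : Continuous ρx)
    (hv : ContDiff ℝ 2 (fun x => v x / ρx x)) : Continuous (BopEnergyDensity κ lam ε ρx v) := by
  have h₀ : Continuous (fun x => v x / ρx x) := hv.continuous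
  have h₁ : Continuous (deriv fun x => v x / ρx x) := hv.continuous_deriv (by norm_num)
  have h₂ := hv.continuous_iteratedDeriv 2 le_rfl
  unfold BopEnergyDensity
  fun_prop

theorem BopEnergyDensity_nonneg (hκ : 0 ≤ κ) (hε : 0 ≤ ε) (hlam : 0 ≤ lam) (x : ℝ) :
    0 ≤ BopEnergyDensity κ lam ε ρx v x := by
  unfold BopEnergyDensity
  positivity

theorem eq_zero_of_BopEnergyDensity_eq_zero (hκ : 0 ≤ κ) (hε : 0 ≤ ε) (hlam : 0 ≤ lam) {x : ℝ}
    (hρx : ρx x ≠ 0) (h : BopEnergyDensity κ lam ε ρx v x = 0) : v x = 0 := by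
  unfold BopEnergyDensity at h
  have hpos : 0 < κ + ρx x ^ 2 := by positivity
  have hsq : (v x / ρx x) ^ 2 * (κ + ρx x ^ 2) = 0 := by
    apply le_antisymm _ (by positivity)
    nlinarith [mul_nonneg hε (sq_nonneg (iteratedDeriv 2 (fun y => v y / ρx y) x)),
      mul_nonneg hlam (sq_nonneg (deriv (fun y => v y / ρx y) x))]
  simpa [hpos.ne', hρx] using hsq

end Bop

theorem Bop_positive_definite_general
    (κ lam ε : ℝ) (hκ : 0 < κ) (hε : 0 < ε) (hlam : 0 ≤ lam)
    (ρ : ℝ → ℝ) (hρx : Continuous (deriv ρ))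
    (hρxne : ∀ x ∈ Icc (0:ℝ) 1, deriv ρ x ≠ 0)
    (v : ℝ → ℝ)
    (hv : ContDiff ℝ 4 (fun x => v x / deriv ρ x))
    (hv0 : v 0 = 0) (hv1 : v 1 = 0)
    (hv''0 : iteratedDeriv 2 (fun x => v x / deriv ρ x) 0 = 0)
    (hv''1 : iteratedDeriv 2 (fun x => v x / deriv ρ x) 1 = 0) :
    (∫ x in (0:ℝ)..1, Bop κ lam ε (deriv ρ) v x * v x
      = ∫ x in (0:ℝ)..1,
          (ε * (iteratedDeriv 2 (fun y => v y / deriv ρ y) x) ^ 2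
            + lam * (deriv (fun y => v y / deriv ρ y) x) ^ 2
            + (v x / deriv ρ x) ^ 2 * (κ + (deriv ρ x) ^ 2))) ∧
    (0 ≤ ∫ x in (0:ℝ)..1, Bop κ lam ε (deriv ρ) v x * v x) ∧
    ((∫ x in (0:ℝ)..1, Bop κ lam ε (deriv ρ) v x * v x) = 0 ↔
      ∀ x ∈ Icc (0:ℝ) 1, v x = 0) := by
  have hform := integral_Bop_mul_self (κ := κ) (lam := lam) (ε := ε) hρx hv hv0 hv1 hv''0 hv''1
  have hdens := BopEnergyDensity_nonneg (ρx := deriv ρ) (v := v) hκ.le hε.le hlam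
  refine ⟨hform, hform ▸ integral_nonneg zero_le_one fun x _ => hdens x, fun h x hx => ?_,
    fun hv₀ => ?_⟩
  · have hzero := eqOn_zero_of_integral_eq_zero zero_lt_one
      (continuous_BopEnergyDensity hρx (hv.of_le (by norm_num))) hdens (hform ▸ h) hx
    exact eq_zero_of_BopEnergyDensity_eq_zero hκ.le hε.le hlam (hρxne x hx) hzero
  · rw [integral_congr (g := fun _ => 0) fun x hx => ?_, intervalIntegral.integral_zero]
    rw [uIcc_of_le zero_le_one] at hx
    simp [hv₀ x hx]

/-- The operator `B` is strictly positive definite on `L²(0,1)`: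
`∫₀¹ (Bv) v = ∫₀¹ [ε ((v/ρ_x)'')² + λ ((v/ρ_x)')² + (v/ρ_x)²(κ + ρ_x²)] ≥ 0`,
with equality if and only if `v ≡ 0` on `[0,1]`. -/
theorem Bop_positive_definite
    (κ lam ε : ℝ) (hκ : 0 < κ) (hε : 0 < ε) (hlam : 0 ≤ lam)
    (ρ : ℝ → ℝ) (hρ : Differentiable ℝ ρ) (hρx : Continuous (deriv ρ))
    (hρxne : ∀ x ∈ Icc (0:ℝ) 1, deriv ρ x ≠ 0)
    (v : ℝ → ℝ)
    (hv : ContDiff ℝ 4 (fun x => v x / deriv ρ x))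
    (hv0 : v 0 = 0) (hv1 : v 1 = 0)
    (hv''0 : iteratedDeriv 2 (fun x => v x / deriv ρ x) 0 = 0)
    (hv''1 : iteratedDeriv 2 (fun x => v x / deriv ρ x) 1 = 0) :
    (∫ x in (0:ℝ)..1, Bop κ lam ε (deriv ρ) v x * v x
      = ∫ x in (0:ℝ)..1,
          (ε * (iteratedDeriv 2 (fun y => v y / deriv ρ y) x) ^ 2
            + lam * (deriv (fun y => v y / deriv ρ y) x) ^ 2
            + (v x / deriv ρ x) ^ 2 * (κ + (deriv ρ x) ^ 2))) ∧
    (0 ≤ ∫ x in (0:ℝ)..1, Bop κ lam ε (deriv ρ) v x * v x) ∧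
    ((∫ x in (0:ℝ)..1, Bop κ lam ε (deriv ρ) v x * v x) = 0 ↔
      ∀ x ∈ Icc (0:ℝ) 1, v x = 0) :=
  Bop_positive_definite_general κ lam ε hκ hε hlam ρ hρx hρxne v hv hv0 hv1 hv''0 hv''1
end

section
/- Let κ,ε>0, λ≥0, and 0 ≤ m ≤ M, and let ρ : [0,1] → ℝ be differentiable with continuous derivative ρ_x satisfying m ≤ |ρ_x(x)| ≤ M on [0,1] with ρ_x nowhere zero. Let θ ∈ L²(0,1), let u satisfy Bu = θ (with the boundary conditions of B), and let w_m, w_M be four times continuously differentiable solutions of L_m w_m = ρ_x θ and L_M w_M = ρ_x θ with w_m = w_m'' = w_M = w_M'' = 0 at x ∈ {0,1}. Then ∫₀¹ (θρ_x) w_M dx ≤ ∫₀¹ θ u dx ≤ ∫₀¹ (θρ_x) w_m dx; equivalently, ∫₀¹θ² − ∫₀¹(θρ_x)w_m ≤ ⟨θ,(I−B^{-1})θ⟩ ≤ ∫₀¹θ² − ∫₀¹(θρ_x)w_M. -/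
open MeasureTheory Set intervalIntegral

section FourthOrderProblem

variable {ε lam a b : ℝ} {q q₁ q₂ f p p₁ p₂ r : ℝ → ℝ}

lemma integral_mul_deriv_eq_neg_of_boundary_eq_zero {u v : ℝ → ℝ}
    (hu : ContDiff ℝ 1 u) (hv : ContDiff ℝ 1 v) (ha : u a * v a = 0) (hb : u b * v b = 0) :
    ∫ x in a..b, u x * deriv v x = -∫ x in a..b, deriv u x * v x := by
  rw [integral_mul_deriv_eq_deriv_mul (fun x _ => (hu.differentiable one_ne_zero x).hasDerivAt)
      (fun x _ => (hv.differentiable one_ne_zero x).hasDerivAt)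
      ((hu.continuous_deriv le_rfl).intervalIntegrable a b)
      ((hv.continuous_deriv le_rfl).intervalIntegrable a b), ha, hb]
  ring

lemma iteratedDeriv_two_eq_deriv_deriv : iteratedDeriv 2 p = deriv (deriv p) := by
  rw [iteratedDeriv_succ, iteratedDeriv_one]

lemma integral_iteratedDeriv_two_mul (hp : ContDiff ℝ 2 p) (hr : ContDiff ℝ 1 r)
    (ha : r a = 0) (hb : r b = 0) :
    ∫ x in a..b, iteratedDeriv 2 p x * r x = -∫ x in a..b, deriv p x * deriv r x := by
  have h := integral_mul_deriv_eq_neg_of_boundary_eq_zero (a := a) (b := b) hr hp.deriv'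
    (by simp [ha]) (by simp [hb])
  simp only [iteratedDeriv_two_eq_deriv_deriv, mul_comm _ (r _), h, mul_comm (deriv r _)]

lemma integral_iteratedDeriv_four_mul (hp : ContDiff ℝ 4 p) (hr : ContDiff ℝ 2 r)
    (ha : r a = 0) (hb : r b = 0)
    (hpa : iteratedDeriv 2 p a = 0) (hpb : iteratedDeriv 2 p b = 0) :
    ∫ x in a..b, iteratedDeriv 4 p x * r x
      = ∫ x in a..b, iteratedDeriv 2 p x * iteratedDeriv 2 r x := by
  have hp₂ : ContDiff ℝ 2 (iteratedDeriv 2 p) := by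
    rw [iteratedDeriv_eq_iterate]; exact hp.iterate_deriv' 2 2
  have h₄ : iteratedDeriv 4 p = iteratedDeriv 2 (iteratedDeriv 2 p) := by
    simp only [iteratedDeriv_eq_iterate, ← Function.iterate_add_apply]
  have h := integral_mul_deriv_eq_neg_of_boundary_eq_zero (a := a) (b := b) hr.deriv' hp₂.of_succ
    (by simp [hpa]) (by simp [hpb])
  rw [h₄, integral_iteratedDeriv_two_mul hp₂ hr.of_succ ha hb]
  simp only [mul_comm (deriv (iteratedDeriv 2 p) _), h, iteratedDeriv_two_eq_deriv_deriv (p := r),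
    neg_neg, mul_comm (deriv (deriv r) _)]


/-- The constant-coefficient operator `L_c` of the paper is `fourthOrderOp ε λ (fun _ => κ + c²)`. -/
noncomputable def fourthOrderOp (ε lam : ℝ) (q p : ℝ → ℝ) (x : ℝ) : ℝ :=
  ε * iteratedDeriv 4 p x - lam * iteratedDeriv 2 p x + q x * p x

noncomputable def energyForm (ε lam : ℝ) (q : ℝ → ℝ) (a b : ℝ) (p r : ℝ → ℝ) : ℝ :=
  ∫ x in a..b, ε * iteratedDeriv 2 p x * iteratedDeriv 2 r x + lam * deriv p x * deriv r x
    + q x * p x * r x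

lemma intervalIntegrable_energyDensity (hq : Continuous q) (hp : ContDiff ℝ 2 p)
    (hr : ContDiff ℝ 2 r) :
    IntervalIntegrable (fun x => ε * iteratedDeriv 2 p x * iteratedDeriv 2 r x
      + lam * deriv p x * deriv r x + q x * p x * r x) volume a b := by
  have := hp.continuous_iteratedDeriv 2 le_rfl
  have := hr.continuous_iteratedDeriv 2 le_rfl
  have := hp.continuous_deriv one_le_two
  have := hr.continuous_deriv one_le_two
  have := hp.continuous
  have := hr.continuous
  exact Continuous.intervalIntegrable (by fun_prop) a b

lemma integral_fourthOrderOp_mul (hq : Continuous q) (hp : ContDiff ℝ 4 p) (hr : ContDiff ℝ 2 r)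
    (ha : r a = 0) (hb : r b = 0)
    (hpa : iteratedDeriv 2 p a = 0) (hpb : iteratedDeriv 2 p b = 0) :
    ∫ x in a..b, fourthOrderOp ε lam q p x * r x = energyForm ε lam q a b p r := by
  have := hp.continuous_iteratedDeriv 4 le_rfl
  have := hp.continuous_iteratedDeriv 2 (by norm_num)
  have := hp.continuous_deriv (by norm_num)
  have := hp.continuous
  have := hr.continuous
  have := hr.continuous_iteratedDeriv 2 le_rfl
  have := hr.continuous_deriv one_le_two
  calc ∫ x in a..b, fourthOrderOp ε lam q p x * r x
      = ε * (∫ x in a..b, iteratedDeriv 4 p x * r x)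
        - lam * (∫ x in a..b, iteratedDeriv 2 p x * r x) + ∫ x in a..b, q x * p x * r x := by
        simp only [← intervalIntegral.integral_const_mul]
        rw [← intervalIntegral.integral_sub, ← intervalIntegral.integral_add]
        · simp only [fourthOrderOp]; congr 1; ext x; ring
        all_goals exact Continuous.intervalIntegrable (by fun_prop) a b
    _ = ε * (∫ x in a..b, iteratedDeriv 2 p x * iteratedDeriv 2 r x)
        + lam * (∫ x in a..b, deriv p x * deriv r x) + ∫ x in a..b, q x * p x * r x := by
        rw [integral_iteratedDeriv_four_mul hp hr ha hb hpa hpb,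
          integral_iteratedDeriv_two_mul (hp.of_le (by norm_num)) hr.of_succ ha hb]
        ring
    _ = energyForm ε lam q a b p r := by
        rw [energyForm, intervalIntegral.integral_add, intervalIntegral.integral_add]
        · simp only [mul_assoc, intervalIntegral.integral_const_mul]
        all_goals exact Continuous.intervalIntegrable (by fun_prop) a b

lemma two_mul_energyForm_le (hab : a ≤ b) (hε : 0 ≤ ε) (hlam : 0 ≤ lam) (hq : Continuous q)
    (hq₀ : ∀ x ∈ Icc a b, 0 ≤ q x) (hp : ContDiff ℝ 2 p) (hr : ContDiff ℝ 2 r) :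
    2 * energyForm ε lam q a b p r ≤ energyForm ε lam q a b p p + energyForm ε lam q a b r r := by
  rw [energyForm, energyForm, energyForm, ← intervalIntegral.integral_const_mul,
    ← intervalIntegral.integral_add (intervalIntegrable_energyDensity hq hp hp)
      (intervalIntegrable_energyDensity hq hr hr)]
  refine integral_mono_on hab ((intervalIntegrable_energyDensity hq hp hr).const_mul 2)
    ((intervalIntegrable_energyDensity hq hp hp).add (intervalIntegrable_energyDensity hq hr hr))
    fun x hx => ?_
  have := hq₀ x hx
  nlinarith [mul_nonneg hε (sq_nonneg (iteratedDeriv 2 p x - iteratedDeriv 2 r x)),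
    mul_nonneg hlam (sq_nonneg (deriv p x - deriv r x)), mul_nonneg this (sq_nonneg (p x - r x))]

lemma energyForm_self_mono (hab : a ≤ b) (hq₁ : Continuous q₁) (hq₂ : Continuous q₂)
    (hq : ∀ x ∈ Icc a b, q₁ x ≤ q₂ x) (hp : ContDiff ℝ 2 p) :
    energyForm ε lam q₁ a b p p ≤ energyForm ε lam q₂ a b p p :=
  integral_mono_on hab (intervalIntegrable_energyDensity hq₁ hp hp)
    (intervalIntegrable_energyDensity hq₂ hp hp) fun x hx => by
      nlinarith [mul_le_mul_of_nonneg_right (hq x hx) (mul_self_nonneg (p x))]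


lemma integral_mul_eq_energyForm_of_eqOn (hab : a ≤ b) (hq : Continuous q) (hp : ContDiff ℝ 4 p)
    (hr : ContDiff ℝ 2 r) (ha : r a = 0) (hb : r b = 0)
    (hpa : iteratedDeriv 2 p a = 0) (hpb : iteratedDeriv 2 p b = 0)
    (hf : EqOn (fourthOrderOp ε lam q p) f (Ioo a b)) :
    ∫ x in a..b, f x * r x = energyForm ε lam q a b p r := by
  rw [← integral_fourthOrderOp_mul hq hp hr ha hb hpa hpb]
  exact integral_congr_Ioo_of_le hab fun x hx => by rw [hf hx]

theorem integral_mul_solution_le_of_potential_le (hab : a ≤ b) (hε : 0 ≤ ε) (hlam : 0 ≤ lam)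
    (hq₁ : Continuous q₁) (hq₂ : Continuous q₂) (hq₁₀ : ∀ x ∈ Icc a b, 0 ≤ q₁ x)
    (hq : ∀ x ∈ Icc a b, q₁ x ≤ q₂ x)
    (hp₁ : ContDiff ℝ 4 p₁) (hp₁a : p₁ a = 0) (hp₁b : p₁ b = 0)
    (hp₁a'' : iteratedDeriv 2 p₁ a = 0) (hp₁b'' : iteratedDeriv 2 p₁ b = 0)
    (hp₂ : ContDiff ℝ 4 p₂) (hp₂a : p₂ a = 0) (hp₂b : p₂ b = 0)
    (hp₂a'' : iteratedDeriv 2 p₂ a = 0) (hp₂b'' : iteratedDeriv 2 p₂ b = 0)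
    (h₁ : EqOn (fourthOrderOp ε lam q₁ p₁) f (Ioo a b))
    (h₂ : EqOn (fourthOrderOp ε lam q₂ p₂) f (Ioo a b)) :
    ∫ x in a..b, f x * p₂ x ≤ ∫ x in a..b, f x * p₁ x := by
  have hp₁' : ContDiff ℝ 2 p₁ := hp₁.of_le (by norm_num)
  have hp₂' : ContDiff ℝ 2 p₂ := hp₂.of_le (by norm_num)
  have e₁₁ := integral_mul_eq_energyForm_of_eqOn hab hq₁ hp₁ hp₁' hp₁a hp₁b hp₁a'' hp₁b'' h₁
  have e₁₂ := integral_mul_eq_energyForm_of_eqOn hab hq₁ hp₁ hp₂' hp₂a hp₂b hp₁a'' hp₁b'' h₁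
  have e₂₂ := integral_mul_eq_energyForm_of_eqOn hab hq₂ hp₂ hp₂' hp₂a hp₂b hp₂a'' hp₂b'' h₂
  have := two_mul_energyForm_le hab hε hlam hq₁ hq₁₀ hp₁' hp₂'
  have := energyForm_self_mono (ε := ε) (lam := lam) hab hq₁ hq₂ hq hp₂'
  linarith

end FourthOrderProblem

theorem hessian_two_sided_comparison_general
    (κ lam ε m M : ℝ) (hκ : 0 < κ) (hlam : 0 ≤ lam) (hε : 0 < ε)
    (hm : 0 ≤ m)
    (ρ : ℝ → ℝ) (hρx : Continuous (deriv ρ))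
    (hbnd : ∀ x ∈ Icc (0:ℝ) 1,
      deriv ρ x ≠ 0 ∧ m ≤ |deriv ρ x| ∧ |deriv ρ x| ≤ M)
    (θ : ℝ → ℝ)
    (u : ℝ → ℝ) (hu : ContDiff ℝ 4 (fun x => u x / deriv ρ x))
    (hu0 : u 0 = 0) (hu1 : u 1 = 0)
    (hu''0 : iteratedDeriv 2 (fun x => u x / deriv ρ x) 0 = 0)
    (hu''1 : iteratedDeriv 2 (fun x => u x / deriv ρ x) 1 = 0)
    (hBu : ∀ x ∈ Ioo (0:ℝ) 1, Bop κ lam ε (deriv ρ) u x = θ x)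
    (wm wM : ℝ → ℝ) (hwm : ContDiff ℝ 4 wm) (hwM : ContDiff ℝ 4 wM)
    (hwmeq : ∀ x ∈ Ioo (0:ℝ) 1,
      ε * iteratedDeriv 4 wm x - lam * iteratedDeriv 2 wm x + (κ + m ^ 2) * wm x
        = deriv ρ x * θ x)
    (hwMeq : ∀ x ∈ Ioo (0:ℝ) 1,
      ε * iteratedDeriv 4 wM x - lam * iteratedDeriv 2 wM x + (κ + M ^ 2) * wM x
        = deriv ρ x * θ x)
    (hwm0 : wm 0 = 0) (hwm1 : wm 1 = 0)
    (hwm''0 : iteratedDeriv 2 wm 0 = 0) (hwm''1 : iteratedDeriv 2 wm 1 = 0)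
    (hwM0 : wM 0 = 0) (hwM1 : wM 1 = 0)
    (hwM''0 : iteratedDeriv 2 wM 0 = 0) (hwM''1 : iteratedDeriv 2 wM 1 = 0) :
    ((∫ x in (0:ℝ)..1, (θ x * deriv ρ x) * wM x) ≤ (∫ x in (0:ℝ)..1, θ x * u x) ∧
      (∫ x in (0:ℝ)..1, θ x * u x) ≤ ∫ x in (0:ℝ)..1, (θ x * deriv ρ x) * wm x) ∧
    (((∫ x in (0:ℝ)..1, (θ x) ^ 2) - ∫ x in (0:ℝ)..1, (θ x * deriv ρ x) * wm x)
        ≤ (∫ x in (0:ℝ)..1, (θ x) ^ 2) - (∫ x in (0:ℝ)..1, θ x * u x) ∧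
      ((∫ x in (0:ℝ)..1, (θ x) ^ 2) - (∫ x in (0:ℝ)..1, θ x * u x))
        ≤ (∫ x in (0:ℝ)..1, (θ x) ^ 2) - ∫ x in (0:ℝ)..1, (θ x * deriv ρ x) * wM x) := by
  set g : ℝ → ℝ := fun x => u x / deriv ρ x
  have hρx₀ : ∀ x ∈ Ioo (0:ℝ) 1, deriv ρ x ≠ 0 := fun x hx => (hbnd x (Ioo_subset_Icc_self hx)).1
  have hg : EqOn (fourthOrderOp ε lam (fun x => κ + deriv ρ x ^ 2) g)
      (fun x => θ x * deriv ρ x) (Ioo 0 1) := fun x hx => by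
    simp only [← hBu x hx, Bop, fourthOrderOp, g]
    field_simp [hρx₀ x hx]
  have hθu : ∫ x in (0:ℝ)..1, θ x * u x = ∫ x in (0:ℝ)..1, (θ x * deriv ρ x) * g x :=
    integral_congr_Ioo_of_le zero_le_one fun x hx => by simp only [g]; field_simp [hρx₀ x hx]
  have hq : Continuous fun x => κ + deriv ρ x ^ 2 := by fun_prop
  have upper := integral_mul_solution_le_of_potential_le zero_le_one hε.le hlam continuous_const
    hq (fun _ _ => by positivity)
    (fun x hx => by have := (hbnd x hx).2.1; rw [← sq_abs (deriv ρ x)]; gcongr)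
    hwm hwm0 hwm1 hwm''0 hwm''1 hu (by simp [g, hu0]) (by simp [g, hu1]) hu''0 hu''1
    (fun x hx => (hwmeq x hx).trans (mul_comm _ _)) hg
  have lower := integral_mul_solution_le_of_potential_le zero_le_one hε.le hlam hq
    continuous_const (fun _ _ => by positivity)
    (fun x hx => by have := (hbnd x hx).2.2; rw [← sq_abs (deriv ρ x)]; gcongr)
    hu (by simp [g, hu0]) (by simp [g, hu1]) hu''0 hu''1 hwM hwM0 hwM1 hwM''0 hwM''1
    hg (fun x hx => (hwMeq x hx).trans (mul_comm _ _))
  rw [hθu]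
  exact ⟨⟨lower, upper⟩, sub_le_sub_left upper _, sub_le_sub_left lower _⟩

/-- Two-sided comparison of the Hessian quadratic form: if
`Bu = θ`, and `w_m, w_M` solve the constant-coefficient problems
`ε w'''' − λ w'' + (κ+c²) w = ρ_x θ` for `c = m, M` respectively, with
`w = w'' = 0` at `x ∈ {0,1}`, then `∫₀¹ (θρ_x) w_M ≤ ∫₀¹ θ u ≤ ∫₀¹ (θρ_x) w_m`;
equivalently `∫θ² − ∫(θρ_x)w_m ≤ ⟨θ,(I−B⁻¹)θ⟩ ≤ ∫θ² − ∫(θρ_x)w_M`. -/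
theorem hessian_two_sided_comparison
    (κ lam ε m M : ℝ) (hκ : 0 < κ) (hlam : 0 ≤ lam) (hε : 0 < ε)
    (hm : 0 ≤ m) (hmM : m ≤ M)
    (ρ : ℝ → ℝ) (hρ : Differentiable ℝ ρ) (hρx : Continuous (deriv ρ))
    (hbnd : ∀ x ∈ Icc (0:ℝ) 1,
      deriv ρ x ≠ 0 ∧ m ≤ |deriv ρ x| ∧ |deriv ρ x| ≤ M)
    (θ : ℝ → ℝ) (hθ : MemLp θ 2 (volume.restrict (Ioo (0:ℝ) 1)))
    (u : ℝ → ℝ) (hu : ContDiff ℝ 4 (fun x => u x / deriv ρ x))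
    (hu0 : u 0 = 0) (hu1 : u 1 = 0)
    (hu''0 : iteratedDeriv 2 (fun x => u x / deriv ρ x) 0 = 0)
    (hu''1 : iteratedDeriv 2 (fun x => u x / deriv ρ x) 1 = 0)
    (hBu : ∀ x ∈ Ioo (0:ℝ) 1, Bop κ lam ε (deriv ρ) u x = θ x)
    (wm wM : ℝ → ℝ) (hwm : ContDiff ℝ 4 wm) (hwM : ContDiff ℝ 4 wM)
    (hwmeq : ∀ x ∈ Ioo (0:ℝ) 1,
      ε * iteratedDeriv 4 wm x - lam * iteratedDeriv 2 wm x + (κ + m ^ 2) * wm x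
        = deriv ρ x * θ x)
    (hwMeq : ∀ x ∈ Ioo (0:ℝ) 1,
      ε * iteratedDeriv 4 wM x - lam * iteratedDeriv 2 wM x + (κ + M ^ 2) * wM x
        = deriv ρ x * θ x)
    (hwm0 : wm 0 = 0) (hwm1 : wm 1 = 0)
    (hwm''0 : iteratedDeriv 2 wm 0 = 0) (hwm''1 : iteratedDeriv 2 wm 1 = 0)
    (hwM0 : wM 0 = 0) (hwM1 : wM 1 = 0)
    (hwM''0 : iteratedDeriv 2 wM 0 = 0) (hwM''1 : iteratedDeriv 2 wM 1 = 0) :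
    ((∫ x in (0:ℝ)..1, (θ x * deriv ρ x) * wM x) ≤ (∫ x in (0:ℝ)..1, θ x * u x) ∧
      (∫ x in (0:ℝ)..1, θ x * u x) ≤ ∫ x in (0:ℝ)..1, (θ x * deriv ρ x) * wm x) ∧
    (((∫ x in (0:ℝ)..1, (θ x) ^ 2) - ∫ x in (0:ℝ)..1, (θ x * deriv ρ x) * wm x)
        ≤ (∫ x in (0:ℝ)..1, (θ x) ^ 2) - (∫ x in (0:ℝ)..1, θ x * u x) ∧
      ((∫ x in (0:ℝ)..1, (θ x) ^ 2) - (∫ x in (0:ℝ)..1, θ x * u x))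
        ≤ (∫ x in (0:ℝ)..1, (θ x) ^ 2) - ∫ x in (0:ℝ)..1, (θ x * deriv ρ x) * wM x) :=
  hessian_two_sided_comparison_general κ lam ε m M hκ hlam hε hm ρ hρx hbnd θ u hu hu0 hu1 hu''0
    hu''1 hBu wm wM hwm hwM hwmeq hwMeq hwm0 hwm1 hwm''0 hwm''1 hwM0 hwM1 hwM''0 hwM''1
end
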